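/- arXiv:1607.01545 — 7 statements merged into one kernel-verified Lean document; each statement's English description precedes it below -/
import Mathlib

section
/- Let Λ be a numerical semigroup with conductor c = λ_k. For 0 ≤ i < k, any order-i seed λ_t of Λ satisfies λ_t ≤ c + λ_{i+1} − λ_i − 1; in particular the number of order-i seeds of Λ is at most λ_{i+1} − λ_i. -/
/-- A numerical semigroup: a subset of ℕ containing 0, closed under addition,
with finite complement. -/
def IsNumericalSemigroup (S : Set ℕ) : Prop :=
  0 ∈ S ∧ (∀ a ∈ S, ∀ b ∈ S, a + b ∈ S) ∧ Sᶜ.Finite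

/-- `nsElt S i` = λ_i, the i-th smallest element of `S` (λ_0 = 0 when 0 ∈ S). -/
noncomputable def nsElt (S : Set ℕ) (i : ℕ) : ℕ := Nat.nth (· ∈ S) i

/-- The conductor: the smallest `c` such that every `n ≥ c` lies in `S`. -/
noncomputable def nsConductor (S : Set ℕ) : ℕ := sInf {c | ∀ n, c ≤ n → n ∈ S}

/-- The genus: the number of gaps. -/
noncomputable def nsGenus (S : Set ℕ) : ℕ := Sᶜ.ncard

/-- A generator: a nonzero element of `S` which is not a sum of two nonzero
elements of `S`. -/
def IsGenerator (S : Set ℕ) (σ : ℕ) : Prop :=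
  σ ∈ S ∧ σ ≠ 0 ∧ ¬ ∃ a ∈ S, ∃ b ∈ S, a ≠ 0 ∧ b ≠ 0 ∧ a + b = σ

/-- `nsDel S i` = Λ_i = Λ \ {λ_1, …, λ_i}. -/
def nsDel (S : Set ℕ) (i : ℕ) : Set ℕ := S \ (nsElt S '' Set.Icc 1 i)

theorem stmt6 (S : Set ℕ) (hS : IsNumericalSemigroup S) (k : ℕ)
    (hk : nsElt S k = nsConductor S) (i : ℕ) (hi : i < k) :
    (∀ t, k ≤ t → IsGenerator (nsDel S i) (nsElt S t + nsElt S i) →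
      nsElt S t ≤ nsConductor S + nsElt S (i + 1) - nsElt S i - 1) ∧
    {x | ∃ t, k ≤ t ∧ x = nsElt S t ∧
        IsGenerator (nsDel S i) (nsElt S t + nsElt S i)}.ncard
      ≤ nsElt S (i + 1) - nsElt S i := by
  obtain ⟨h0, hadd, hfin⟩ := hS
  have hinf : {n | n ∈ S}.Infinite := by
    have := hfin.infinite_compl
    simpa using this
  have hmono : StrictMono (nsElt S) := Nat.nth_strictMono hinf
  have hmem : ∀ n, nsElt S n ∈ S := fun n => Nat.nth_mem_of_infinite hinf n
  have h0' : nsElt S 0 = 0 := by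
    have : nsElt S 0 = sInf {n | n ∈ S} := Nat.nth_zero
    rw [this, Nat.sInf_eq_zero]; left; exact h0
  -- conductor property
  have hCne : {c | ∀ n, c ≤ n → n ∈ S}.Nonempty := by
    obtain ⟨N, hN⟩ := hfin.bddAbove
    exact ⟨N + 1, fun n hn => by
      by_contra hns
      exact absurd (hN hns) (by omega)⟩
  have hcond : ∀ n, nsConductor S ≤ n → n ∈ S := Nat.sInf_mem hCne
  have hcpos : 0 < nsConductor S := by
    rw [← hk, ← h0']
    exact hmono (by omega)
  have hlt : nsElt S i < nsElt S (i + 1) := hmono (by omega)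
  have hik : nsElt S i < nsConductor S := by rw [← hk]; exact hmono hi
  -- not in image lemma
  have himg : ∀ x, nsElt S i < x → x ∉ nsElt S '' Set.Icc 1 i := by
    rintro x hx ⟨j, ⟨_, hj2⟩, rfl⟩
    exact absurd (hmono.monotone hj2) (by omega)
  have main : ∀ t, k ≤ t → IsGenerator (nsDel S i) (nsElt S t + nsElt S i) →
      nsElt S t ≤ nsConductor S + nsElt S (i + 1) - nsElt S i - 1 := by
    intro t ht hgen
    by_contra hcon
    have hge : nsConductor S + nsElt S (i + 1) ≤ nsElt S t + nsElt S i := by omega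
    set a := nsElt S t + nsElt S i - nsElt S (i + 1) with ha
    have haeq : a + nsElt S (i + 1) = nsElt S t + nsElt S i := by omega
    have hac : nsConductor S ≤ a := by omega
    have haS : a ∈ S := hcond a hac
    refine hgen.2.2 ⟨a, ⟨haS, himg a (by omega)⟩, nsElt S (i + 1),
      ⟨hmem _, himg _ hlt⟩, by omega, by omega, haeq⟩
  refine ⟨main, ?_⟩
  have hsub : {x | ∃ t, k ≤ t ∧ x = nsElt S t ∧
      IsGenerator (nsDel S i) (nsElt S t + nsElt S i)} ⊆
      Set.Icc (nsConductor S) (nsConductor S + nsElt S (i + 1) - nsElt S i - 1) := by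
    rintro x ⟨t, ht, rfl, hgen⟩
    refine ⟨?_, main t ht hgen⟩
    rw [← hk]; exact hmono.monotone ht
  calc _ ≤ (Set.Icc (nsConductor S) (nsConductor S + nsElt S (i + 1) - nsElt S i - 1)).ncard :=
        Set.ncard_le_ncard hsub (Set.finite_Icc _ _)
    _ = nsElt S (i + 1) - nsElt S i := by
        rw [← Finset.coe_Icc, Set.ncard_coe_finset, Nat.card_Icc]; omega
end

section
/- Let Λ be a numerical semigroup with conductor c = λ_k, let λ_s (s ≥ k) be an order-0 seed of Λ, and set Λ̃ = Λ \ {λ_s}. For any 0 ≤ i < k and any t > s, if λ_t is an order-i seed of Λ, then λ_t is an order-i seed of Λ̃. -/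
theorem stmt10 (S : Set ℕ) (hS : IsNumericalSemigroup S) (k s : ℕ)
    (hk : nsElt S k = nsConductor S) (hs : k ≤ s)
    (hgen : IsGenerator S (nsElt S s))
    (i t : ℕ) (hi : i < k) (ht : s < t)
    (hseed : IsGenerator (nsDel S i) (nsElt S t + nsElt S i)) :
    IsGenerator (nsDel S i \ {nsElt S s}) (nsElt S t + nsElt S i) := by
  obtain ⟨hmem, hne, hnsum⟩ := hseed
  have hSinf : (setOf (· ∈ S)).Infinite := by
    have := hS.2.2.infinite_compl
    rwa [compl_compl] at this
  have hst : nsElt S s < nsElt S t := (Nat.nth_lt_nth hSinf).2 ht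
  refine ⟨⟨hmem, ?_⟩, hne, ?_⟩
  · intro h
    simp only [Set.mem_singleton_iff] at h
    omega
  · rintro ⟨a, ⟨ha, -⟩, b, ⟨hb, -⟩, h⟩
    exact hnsum ⟨a, ha, b, hb, h⟩
end

section
/- Let Λ be a numerical semigroup with conductor c = λ_k, let λ_s (s ≥ k) be an order-0 seed of Λ, and set Λ̃ = Λ \ {λ_s}. Fix 0 ≤ i < k and t > s, and suppose λ_t is an order-i seed of Λ̃ but not an order-i seed of Λ. Then λ_t = λ_s + λ_j − λ_i for some j ≥ i + 1 with λ_{i+1} ≤ λ_j ≤ λ̃_{i+1}, where λ̃_{i+1} denotes the (i+1)-th smallest nonzero element of Λ̃. -/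
/-! Since `λ_t + λ_i` decomposes in `Λ_i` but not in `Λ_i \ {λ_s}`, one of its summands is `λ_s`,
so `λ_t + λ_i = λ_s + λ_j` with `λ_j ∈ Λ_i`, i.e. `j ≥ i + 1`. If `λ_j` exceeded `x = λ̃_{i+1}`,
then `λ_s + λ_j = x + (λ_s + λ_j - x)` would decompose in `Λ_i \ {λ_s}`, because every integer
above `λ_s ≥ c` lies there. -/

theorem IsGenerator.exists_eq_add_of_not_isGenerator {T : Set ℕ} {a σ : ℕ}
    (hσ : IsGenerator (T \ {a}) σ) (hσT : ¬ IsGenerator T σ) :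
    ∃ m ∈ T, m ≠ 0 ∧ σ = a + m := by
  obtain ⟨⟨hσmem, -⟩, hσ0, hirred⟩ := hσ
  obtain ⟨b, hb, c, hc, hb0, hc0, rfl⟩ : ∃ b ∈ T, ∃ c ∈ T, b ≠ 0 ∧ c ≠ 0 ∧ b + c = σ := by
    by_contra h
    exact hσT ⟨hσmem, hσ0, h⟩
  by_cases hba : b = a
  · exact ⟨c, hc, hc0, by rw [hba]⟩
  by_cases hca : c = a
  · exact ⟨b, hb, hb0, by rw [hca, add_comm]⟩
  exact absurd ⟨b, ⟨hb, hba⟩, c, ⟨hc, hca⟩, hb0, hc0, rfl⟩ hirred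

theorem IsGenerator.right_le_of_Ioi_subset {U : Set ℕ} {a m x : ℕ} (hgen : IsGenerator U (a + m))
    (hU : Set.Ioi a ⊆ U) (hx : x ∈ U) (hx0 : x ≠ 0) : m ≤ x := by
  by_contra! hxm
  exact hgen.2.2 ⟨x, hx, a + m - x, hU (show a < a + m - x by omega), hx0, by omega, by omega⟩

theorem Nat.nth_le_nth_of_forall_imp {p q : ℕ → Prop} (hq : (Set.ofPred q).Infinite)
    (hqp : ∀ n, q n → p n) (n : ℕ) : Nat.nth p n ≤ Nat.nth q n :=
  Nat.nth_le_of_strictMonoOn_of_mapsTo _ (fun k _ => hqp _ (Nat.nth_mem_of_infinite hq k))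
    ((Nat.nth_strictMono hq).strictMonoOn _)

namespace IsNumericalSemigroup

variable {S : Set ℕ} (hS : IsNumericalSemigroup S)
include hS

theorem infinite : S.Infinite :=
  fun h => Set.infinite_univ (Set.union_compl_self S ▸ h.union hS.2.2)

theorem nsElt_zero : nsElt S 0 = 0 :=
  Nat.nth_zero_of_zero hS.1

theorem nsElt_strictMono : StrictMono (nsElt S) :=
  Nat.nth_strictMono hS.infinite

theorem mem_of_nsConductor_le {n : ℕ} (hn : nsConductor S ≤ n) : n ∈ S := by
  have hne : {c | ∀ n, c ≤ n → n ∈ S}.Nonempty := by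
    obtain ⟨N, hN⟩ := hS.2.2.bddAbove
    exact ⟨N + 1, fun n hn => by_contra fun hnS => absurd (hN hnS) (by omega)⟩
  exact Nat.sInf_mem hne n hn

theorem mem_nsDel_of_nsElt_lt {i n : ℕ} (hn : n ∈ S) (hin : nsElt S i < n) : n ∈ nsDel S i := by
  refine ⟨hn, ?_⟩
  rintro ⟨r, hr, rfl⟩
  exact absurd (hS.nsElt_strictMono.monotone hr.2) (not_le.2 hin)

theorem exists_nsElt_eq_of_mem_nsDel {i m : ℕ} (hm : m ∈ nsDel S i) (hm0 : m ≠ 0) :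
    ∃ j, i + 1 ≤ j ∧ nsElt S j = m := by
  classical
  refine ⟨Nat.count (· ∈ S) m, ?_, Nat.nth_count hm.1⟩
  by_contra! hj
  rcases Nat.eq_zero_or_pos (Nat.count (· ∈ S) m) with hj0 | hj0
  · exact hm0 (by rw [← Nat.nth_count hm.1, hj0]; exact hS.nsElt_zero)
  · exact hm.2 ⟨_, ⟨hj0, by omega⟩, Nat.nth_count hm.1⟩

theorem nsElt_le_nsElt_diff_singleton (a n : ℕ) : nsElt S n ≤ nsElt (S \ {a}) n :=
  Nat.nth_le_nth_of_forall_imp (hS.infinite.sdiff (Set.finite_singleton a)) (fun _ h => h.1) n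

end IsNumericalSemigroup

theorem stmt11_general (S : Set ℕ) (hS : IsNumericalSemigroup S) (k s : ℕ)
    (hk : nsElt S k = nsConductor S) (hs : k ≤ s)
    (i t : ℕ) (hi : i < k)
    (h1 : IsGenerator (nsDel S i \ {nsElt S s}) (nsElt S t + nsElt S i))
    (h2 : ¬ IsGenerator (nsDel S i) (nsElt S t + nsElt S i)) :
    ∃ j, i + 1 ≤ j ∧ nsElt S t + nsElt S i = nsElt S s + nsElt S j ∧
      nsElt S (i + 1) ≤ nsElt S j ∧ nsElt S j ≤ nsElt (S \ {nsElt S s}) (i + 1) := by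
  have hmono := hS.nsElt_strictMono
  obtain ⟨m, hm, hm0, hsum⟩ := h1.exists_eq_add_of_not_isGenerator h2
  obtain ⟨j, hij, rfl⟩ := hS.exists_nsElt_eq_of_mem_nsDel hm hm0
  set x := nsElt (S \ {nsElt S s}) (i + 1)
  have hx : nsElt S (i + 1) ≤ x := hS.nsElt_le_nsElt_diff_singleton _ _
  have hxi : nsElt S i < x := (hmono i.lt_succ_self).trans_le hx
  have hxS : x ∈ S \ {nsElt S s} :=
    Nat.nth_mem_of_infinite (hS.infinite.sdiff (Set.finite_singleton _)) (i + 1)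
  have habove : Set.Ioi (nsElt S s) ⊆ nsDel S i \ {nsElt S s} := by
    intro y (hy : nsElt S s < y)
    have hky : nsElt S k < y := (hmono.monotone hs).trans_lt hy
    exact ⟨hS.mem_nsDel_of_nsElt_lt (hS.mem_of_nsConductor_le (hk ▸ hky.le))
      ((hmono hi).trans hky), hy.ne'⟩
  refine ⟨j, hij, hsum, hmono.monotone hij, ?_⟩
  exact (hsum ▸ h1).right_le_of_Ioi_subset habove ⟨hS.mem_nsDel_of_nsElt_lt hxS.1 hxi, hxS.2⟩ (by omega)

theorem stmt11 (S : Set ℕ) (hS : IsNumericalSemigroup S) (k s : ℕ)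
    (hk : nsElt S k = nsConductor S) (hs : k ≤ s)
    (hgen : IsGenerator S (nsElt S s))
    (i t : ℕ) (hi : i < k) (ht : s < t)
    (h1 : IsGenerator (nsDel S i \ {nsElt S s}) (nsElt S t + nsElt S i))
    (h2 : ¬ IsGenerator (nsDel S i) (nsElt S t + nsElt S i)) :
    ∃ j, i + 1 ≤ j ∧ nsElt S t + nsElt S i = nsElt S s + nsElt S j ∧
      nsElt S (i + 1) ≤ nsElt S j ∧ nsElt S j ≤ nsElt (S \ {nsElt S s}) (i + 1) :=
  stmt11_general S hS k s hk hs i t hi h1 h2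
end

section
/- Let Λ be a numerical semigroup with conductor c = λ_k, let λ_s with s ≥ k be an order-0 seed, and suppose i < k − 1. Then λ_s + λ_{i+1} − λ_i is an order-i seed of Λ̃ = Λ \ {λ_s} if and only if λ_s is an order-(i+1) seed of Λ. -/
theorem stmt12 (S : Set ℕ) (hS : IsNumericalSemigroup S) (k s : ℕ)
    (hk : nsElt S k = nsConductor S) (hs : k ≤ s)
    (hgen : IsGenerator S (nsElt S s))
    (i : ℕ) (hi : i + 1 < k) :
    IsGenerator (nsDel S i \ {nsElt S s}) (nsElt S s + nsElt S (i + 1)) ↔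
      IsGenerator (nsDel S (i + 1)) (nsElt S s + nsElt S (i + 1)) := by
  obtain ⟨h0, hadd, hfin⟩ := hS
  have hinf : {x | x ∈ S}.Infinite := Set.infinite_of_finite_compl hfin
  have hmem : ∀ j, nsElt S j ∈ S := fun j => Nat.nth_mem_of_infinite hinf j
  have hmono : StrictMono (nsElt S) := by
    unfold nsElt; exact Nat.nth_strictMono hinf
  set σ := nsElt S s + nsElt S (i + 1) with hσdef
  have hσS : σ ∈ S := hadd _ (hmem s) _ (hmem (i + 1))
  have hips : nsElt S (i + 1) < nsElt S s := hmono (by omega)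
  have hspos : 0 < nsElt S s := (Nat.zero_le _).trans_lt (hmono (show 0 < s by omega))
  have hipos : 0 < nsElt S (i + 1) := (Nat.zero_le _).trans_lt (hmono (Nat.succ_pos i))
  have hii : nsElt S i < nsElt S (i + 1) := hmono (by omega)
  have hl : nsElt S (i + 1) ∈ nsElt S '' Set.Icc 1 (i + 1) :=
    ⟨i + 1, ⟨by omega, le_refl _⟩, rfl⟩
  -- σ belongs to both ambient sets
  have hmemA : σ ∈ nsDel S i \ {nsElt S s} := by
    refine ⟨⟨hσS, ?_⟩, ?_⟩
    · rintro ⟨j, hj, hje⟩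
      have h1 : nsElt S j ≤ nsElt S i := hmono.monotone hj.2
      omega
    · simp only [Set.mem_singleton_iff]; omega
  have hmemB : σ ∈ nsDel S (i + 1) := by
    refine ⟨hσS, ?_⟩
    rintro ⟨j, hj, hje⟩
    have h1 : nsElt S j ≤ nsElt S (i + 1) := hmono.monotone hj.2
    omega
  have hσ0 : σ ≠ 0 := by omega
  -- transfer of membership for summands
  have keyBA : ∀ a b : ℕ, a + b = σ → a ∈ nsDel S (i + 1) → b ∈ nsDel S (i + 1) →
      a ∈ nsDel S i \ {nsElt S s} := by
    rintro a b hab ⟨haS, haNI⟩ ⟨hbS, hbNI⟩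
    refine ⟨⟨haS, ?_⟩, ?_⟩
    · rintro ⟨j, hj, hje⟩
      exact haNI ⟨j, ⟨hj.1, hj.2.trans (by omega)⟩, hje⟩
    · simp only [Set.mem_singleton_iff]
      intro ha
      have hb : b = nsElt S (i + 1) := by omega
      exact hbNI (hb ▸ hl)
  have keyAB : ∀ a b : ℕ, a + b = σ → a ∈ nsDel S i \ {nsElt S s} →
      b ∈ nsDel S i \ {nsElt S s} → a ∈ nsDel S (i + 1) := by
    rintro a b hab ⟨⟨haS, haNI⟩, haNs⟩ ⟨⟨hbS, hbNI⟩, hbNs⟩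
    simp only [Set.mem_singleton_iff] at haNs hbNs
    refine ⟨haS, ?_⟩
    rintro ⟨j, ⟨hj1, hj2⟩, hje⟩
    rcases Nat.lt_or_ge j (i + 1) with h | h
    · exact haNI ⟨j, ⟨hj1, by omega⟩, hje⟩
    · have hj : j = i + 1 := by omega
      subst hj
      have : b = nsElt S s := by omega
      exact hbNs this
  constructor
  · rintro ⟨-, -, hnd⟩
    refine ⟨hmemB, hσ0, ?_⟩
    rintro ⟨a, ha, b, hb, ha0, hb0, hab⟩
    exact hnd ⟨a, keyBA a b hab ha hb, b, keyBA b a (by omega) hb ha, ha0, hb0, hab⟩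
  · rintro ⟨-, -, hnd⟩
    refine ⟨hmemA, hσ0, ?_⟩
    rintro ⟨a, ha, b, hb, ha0, hb0, hab⟩
    exact hnd ⟨a, keyAB a b hab ha hb, b, keyAB b a (by omega) hb ha, ha0, hb0, hab⟩
end

section
/- Let Λ be a numerical semigroup with conductor c = λ_k, let λ_s with s ≥ k be an order-0 seed, and consider i = k − 1. Then λ_s + λ_k is a generator of the semigroup Λ_k = Λ \ {λ_1, …, λ_k} if and only if s = k − 1 + 2 = k + 1 or s = k; equivalently, if s ≥ k + 2 then λ_s + λ_k = λ_{s−1} + λ_{k+1} is a sum of two nonzero elements of Λ_k, hence not a generator of Λ_k. -/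
section Aux

variable {S : Set ℕ}

lemma ns_infinite (hS : IsNumericalSemigroup S) : S.Infinite := by
  have h := hS.2.2.infinite_compl
  rwa [compl_compl] at h

lemma ns_setOf (S : Set ℕ) : {x | x ∈ S} = S := rfl

lemma ns_cond_mem (hS : IsNumericalSemigroup S) :
    ∀ n, nsConductor S ≤ n → n ∈ S := by
  have hne : {c | ∀ n, c ≤ n → n ∈ S}.Nonempty := by
    obtain ⟨N, hN⟩ := hS.2.2.bddAbove
    refine ⟨N + 1, fun n hn => ?_⟩
    by_contra h
    exact absurd (hN h) (by omega)
  exact Nat.sInf_mem hne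

lemma ns_elt_zero (hS : IsNumericalSemigroup S) : nsElt S 0 = 0 := by
  simpa [nsElt] using Nat.nth_zero_of_zero (p := (· ∈ S)) hS.1

lemma ns_elt_mem (hS : IsNumericalSemigroup S) (i : ℕ) : nsElt S i ∈ S :=
  Nat.nth_mem_of_infinite (ns_infinite hS) i

lemma ns_elt_strictMono (hS : IsNumericalSemigroup S) : StrictMono (nsElt S) :=
  Nat.nth_strictMono (ns_infinite hS)

/-- For `k ≤ j`, `λ_j = c + (j - k)` where `c = λ_k = conductor`. -/
lemma ns_elt_ge (hS : IsNumericalSemigroup S) {k : ℕ}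
    (hk : nsElt S k = nsConductor S) (m : ℕ) :
    nsElt S (k + m) = nsConductor S + m := by
  classical
  have hinf := ns_infinite hS
  have hcount : Nat.count (· ∈ S) (nsConductor S) = k := by
    have := Nat.count_nth_of_infinite (p := (· ∈ S)) hinf k
    rwa [show Nat.nth (· ∈ S) k = nsConductor S from hk] at this
  have hcm : ∀ m, Nat.count (· ∈ S) (nsConductor S + m) = k + m := by
    intro m
    induction m with
    | zero => simpa using hcount
    | succ n ih =>
      have hmem : nsConductor S + n ∈ S := ns_cond_mem hS _ (by omega)
      rw [show nsConductor S + (n + 1) = (nsConductor S + n) + 1 by omega,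
        Nat.count_succ, ih, if_pos hmem]; omega
  have hmem : nsConductor S + m ∈ S := ns_cond_mem hS _ (by omega)
  have := Nat.nth_count (p := (· ∈ S)) hmem
  rw [hcm m] at this
  simpa [nsElt] using this

lemma ns_del_mem (hS : IsNumericalSemigroup S) {k : ℕ}
    (hk : nsElt S k = nsConductor S) (n : ℕ) :
    n ∈ nsDel S k ↔ n = 0 ∨ nsConductor S + 1 ≤ n := by
  classical
  have hinf := ns_infinite hS
  constructor
  · rintro ⟨hnS, hnim⟩
    by_contra h
    push_neg at h
    obtain ⟨hne, hle⟩ := h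
    have hj : Nat.nth (· ∈ S) (Nat.count (· ∈ S) n) = n := Nat.nth_count hnS
    set j := Nat.count (· ∈ S) n with hjdef
    have hj1 : 1 ≤ j := by
      rcases Nat.eq_zero_or_pos j with h0 | h1
      · rw [h0] at hj
        have : Nat.nth (· ∈ S) 0 = 0 := ns_elt_zero hS
        omega
      · exact h1
    have hjk : j ≤ k := by
      by_contra hgt
      have := ns_elt_strictMono hS (show k < j by omega)
      rw [show nsElt S j = n from hj, hk] at this
      omega
    exact hnim ⟨j, ⟨hj1, hjk⟩, hj⟩
  · rintro (rfl | hge)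
    · refine ⟨hS.1, ?_⟩
      rintro ⟨j, ⟨hj1, _⟩, hj⟩
      have := ns_elt_strictMono hS (show 0 < j by omega)
      rw [ns_elt_zero hS] at this
      omega
    · refine ⟨ns_cond_mem hS n (by omega), ?_⟩
      rintro ⟨j, ⟨_, hjk⟩, hj⟩
      have : nsElt S j ≤ nsElt S k := (ns_elt_strictMono hS).monotone hjk
      rw [hj, hk] at this
      omega

lemma ns_del_gen (hS : IsNumericalSemigroup S) {k : ℕ}
    (hk : nsElt S k = nsConductor S) (σ : ℕ) :
    IsGenerator (nsDel S k) σ ↔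
      nsConductor S + 1 ≤ σ ∧ σ ≤ 2 * nsConductor S + 1 := by
  set c := nsConductor S
  constructor
  · rintro ⟨hmem, hne, hsum⟩
    rw [ns_del_mem hS hk] at hmem
    have h1 : c + 1 ≤ σ := by omega
    refine ⟨h1, ?_⟩
    by_contra h
    push_neg at h
    exact hsum ⟨c + 1, (ns_del_mem hS hk _).2 (Or.inr le_rfl),
      σ - (c + 1), (ns_del_mem hS hk _).2 (Or.inr (by omega)),
      by omega, by omega, by omega⟩
  · rintro ⟨h1, h2⟩
    refine ⟨(ns_del_mem hS hk σ).2 (Or.inr h1), by omega, ?_⟩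
    rintro ⟨a, ha, b, hb, ha0, hb0, hab⟩
    rw [ns_del_mem hS hk] at ha hb
    omega

end Aux

theorem stmt13 (S : Set ℕ) (hS : IsNumericalSemigroup S) (k s : ℕ)
    (hk : nsElt S k = nsConductor S) (hs : k ≤ s)
    (hgen : IsGenerator S (nsElt S s)) :
    (IsGenerator (nsDel S k) (nsElt S s + nsElt S k) ↔ s = k ∨ s = k + 1) ∧
    (k + 2 ≤ s →
      nsElt S s + nsElt S k = nsElt S (s - 1) + nsElt S (k + 1) ∧
      ¬ IsGenerator (nsDel S k) (nsElt S s + nsElt S k)) := by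
  set c := nsConductor S with hc
  have hls : nsElt S s = c + (s - k) := by
    have := ns_elt_ge hS hk (s - k)
    rwa [show k + (s - k) = s by omega] at this
  have hsne : nsElt S s ≠ 0 := hgen.2.1
  have hck : ¬ (c = 0 ∧ s = k) := by
    rintro ⟨h0, rfl⟩
    apply hsne
    rw [hls]
    omega
  have hmain : IsGenerator (nsDel S k) (nsElt S s + nsElt S k) ↔ s = k ∨ s = k + 1 := by
    rw [ns_del_gen hS hk, hls, hk]
    constructor
    · rintro ⟨h1, h2⟩; omega
    · rintro (rfl | rfl) <;> omega
  refine ⟨hmain, fun hs2 => ⟨?_, ?_⟩⟩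
  · have h1 : nsElt S (s - 1) = c + (s - 1 - k) := by
      have := ns_elt_ge hS hk (s - 1 - k)
      rwa [show k + (s - 1 - k) = s - 1 by omega] at this
    have h2 : nsElt S (k + 1) = c + 1 := ns_elt_ge hS hk 1
    rw [hls, hk, h1, h2]
    omega
  · rw [hmain]
    omega
end

section
/- Let Λ be a numerical semigroup with conductor c = λ_k and let λ_s (s > k) be an order-0 seed, Λ̃ = Λ \ {λ_s}. If k ≤ i < s − 2, then Λ̃ has no order-i seeds. -/
theorem stmt14 (S : Set ℕ) (hS : IsNumericalSemigroup S) (k s : ℕ)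
    (hk : nsElt S k = nsConductor S) (hs : k < s)
    (hgen : IsGenerator S (nsElt S s))
    (i : ℕ) (hik : k ≤ i) (his : i + 2 < s) :
    ∀ x ∈ S \ {nsElt S s}, nsElt S s < x →
      ¬ IsGenerator (nsDel S i \ {nsElt S s}) (x + nsElt S i) := by
  obtain ⟨h0S, hadd, hfin⟩ := hS
  have hSinf : {n | (· ∈ S) n}.Infinite := by
    have := hfin.infinite_compl
    simpa using this
  have hmono : ∀ {m n : ℕ}, m < n → nsElt S m < nsElt S n := fun h =>
    (Nat.nth_lt_nth hSinf).mpr h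
  have hmono' : ∀ {m n : ℕ}, m ≤ n → nsElt S m ≤ nsElt S n := by
    intro m n h
    rcases eq_or_lt_of_le h with rfl | h
    · exact le_refl _
    · exact le_of_lt (hmono h)
  have hmem : ∀ n, nsElt S n ∈ S := fun n => Nat.nth_mem_of_infinite hSinf n
  have hcond : ∀ n, nsConductor S ≤ n → n ∈ S := by
    have hne : {c | ∀ n, c ≤ n → n ∈ S}.Nonempty := by
      refine ⟨hfin.toFinset.sup id + 1, fun n hn => ?_⟩
      by_contra hns
      have hmemf : n ∈ hfin.toFinset := by simpa using hns
      have := Finset.le_sup (f := id) hmemf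
      simp only [id] at this
      omega
    exact Nat.sInf_mem hne
  set L := nsElt S i with hL
  set Ls := nsElt S s with hLs
  have hcL : nsConductor S ≤ L := hk ▸ hmono' hik
  have hL1 : L + 1 ≤ nsElt S (i + 1) := hmono (by omega)
  have hL2 : L + 2 ≤ nsElt S (i + 2) := by
    have h1 : nsElt S (i + 1) < nsElt S (i + 2) := hmono (by omega)
    omega
  have hLsL : L + 2 < Ls := lt_of_le_of_lt hL2 (hmono his)
  intro x hx hxs hgenx
  obtain ⟨hxS, hxne⟩ := hx
  simp only [Set.mem_singleton_iff] at hxne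
  -- membership helper
  have hmemT : ∀ n, n ∈ S → L < n → n ≠ Ls → n ∈ nsDel S i \ {Ls} := by
    intro n hn hgt hne
    refine ⟨⟨hn, ?_⟩, hne⟩
    rintro ⟨j, ⟨_, hj2⟩, rfl⟩
    have := hmono' hj2
    omega
  apply hgenx.2.2
  by_cases hcase : x = Ls + 1
  · refine ⟨L + 2, ?_, Ls - 1, ?_, by omega, by omega, by omega⟩
    · exact hmemT _ (hcond _ (by omega)) (by omega) (by omega)
    · exact hmemT _ (hcond _ (by omega)) (by omega) (by omega)
  · have hxge : Ls + 2 ≤ x := by omega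
    refine ⟨L + 1, ?_, x - 1, ?_, by omega, by omega, by omega⟩
    · exact hmemT _ (hcond _ (by omega)) (by omega) (by omega)
    · exact hmemT _ (hcond _ (by omega)) (by omega) (by omega)
end

section
/- Let Λ be a numerical semigroup with conductor c = λ_k and let λ_s with s > k + 1 be an order-0 seed, Λ̃ = Λ \ {λ_s}. Then the total number of order-i seeds of Λ̃ over all orders i with k ≤ i < s (the 'new-order seeds') is exactly 3; and if s = k + 1, this total is exactly 2. -/
theorem stmt17 (S : Set ℕ) (hS : IsNumericalSemigroup S) (k s : ℕ)
    (hk : nsElt S k = nsConductor S) (hs : k < s)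
    (hgen : IsGenerator S (nsElt S s)) :
    (k + 1 < s →
      {p : ℕ × ℕ | k ≤ p.1 ∧ p.1 < s ∧ p.2 ∈ S \ {nsElt S s} ∧ nsElt S s < p.2 ∧
        IsGenerator (nsDel S p.1 \ {nsElt S s}) (p.2 + nsElt S p.1)}.ncard = 3) ∧
    (s = k + 1 →
      {p : ℕ × ℕ | k ≤ p.1 ∧ p.1 < s ∧ p.2 ∈ S \ {nsElt S s} ∧ nsElt S s < p.2 ∧
        IsGenerator (nsDel S p.1 \ {nsElt S s}) (p.2 + nsElt S p.1)}.ncard = 2) := by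
  classical
  obtain ⟨h0, hadd, hfin⟩ := hS
  have hinf : (setOf (· ∈ S)).Infinite := Set.infinite_of_finite_compl hfin
  have hmemS : ∀ i, nsElt S i ∈ S := fun i => Nat.nth_mem_of_infinite hinf i
  have hmono : StrictMono (nsElt S) := Nat.nth_strictMono hinf
  have hrange : ∀ x ∈ S, ∃ i, nsElt S i = x := by
    intro x hx
    have h := Nat.range_nth_of_infinite hinf
    have : x ∈ Set.range (Nat.nth (· ∈ S)) := by rw [h]; exact hx
    exact this
  have h00 : nsElt S 0 = 0 := by
    rw [nsElt, Nat.nth_zero]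
    exact Nat.sInf_eq_zero.mpr (Or.inl h0)
  set c := nsConductor S with hcdef
  have hc : ∀ n, c ≤ n → n ∈ S := by
    obtain ⟨b, hb⟩ := hfin.bddAbove
    have hne : {m | ∀ n, m ≤ n → n ∈ S}.Nonempty := by
      refine ⟨b + 1, fun n hn => ?_⟩
      by_contra h
      exact absurd (hb h) (by omega)
    exact Nat.sInf_mem hne
  -- λ_j = c + (j - k) for j ≥ k
  have hlam : ∀ j, k ≤ j → nsElt S j = c + (j - k) := by
    intro j hj
    induction j with
    | zero =>
      have hk0 : k = 0 := by omega
      subst hk0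
      simp [← hk]
    | succ j ih =>
      rcases Nat.lt_or_ge j k with h | h
      · have : k = j + 1 := by omega
        subst this
        simp [hk]
      · have hij := ih h
        have h1 : nsElt S j + 1 ∈ S := hc _ (by omega)
        obtain ⟨m, hm⟩ := hrange _ h1
        have hjm : j < m := by
          have := hmono.lt_iff_lt (a := j) (b := m)
          omega
        have hle : nsElt S (j + 1) ≤ nsElt S j + 1 := by
          rw [← hm]; exact hmono.monotone (by omega)
        have hlt : nsElt S j < nsElt S (j + 1) := hmono (by omega)
        omega
  set L := nsElt S s with hLdef
  have hLc : L = c + (s - k) := hlam s (le_of_lt hs)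
  -- characterization of nsDel for i ≥ k
  have hdelmem : ∀ i, k ≤ i → ∀ x, x ∈ nsDel S i ↔ x = 0 ∨ nsElt S i < x := by
    intro i hik x
    have hli : nsElt S i = c + (i - k) := hlam i hik
    constructor
    · rintro ⟨hxS, hximg⟩
      by_contra hcon
      push_neg at hcon
      obtain ⟨hx0, hxle⟩ := hcon
      obtain ⟨m, hm⟩ := hrange x hxS
      apply hximg
      refine ⟨m, Set.mem_Icc.mpr ⟨?_, ?_⟩, hm⟩
      · rcases Nat.eq_zero_or_pos m with rfl | h
        · omega
        · omega
      · have := hmono.le_iff_le (a := m) (b := i)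
        omega
    · rintro (rfl | hlt)
      · refine ⟨h0, ?_⟩
        rintro ⟨m, hmIcc, hm⟩
        rw [Set.mem_Icc] at hmIcc
        have := hmono (show 0 < m by omega)
        omega
      · refine ⟨hc x (by omega), ?_⟩
        rintro ⟨m, hmIcc, hm⟩
        rw [Set.mem_Icc] at hmIcc
        have := hmono.monotone hmIcc.2
        omega
  -- nonzero elements of nsDel S i \ {L}
  have hT : ∀ i, k ≤ i → ∀ y, (y ∈ nsDel S i \ {L} ∧ y ≠ 0) ↔ (nsElt S i < y ∧ y ≠ L) := by
    intro i hik y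
    rw [Set.mem_diff, hdelmem i hik y, Set.mem_singleton_iff]
    constructor
    · rintro ⟨⟨h1, h2⟩, h3⟩
      exact ⟨by omega, h2⟩
    · rintro ⟨h1, h2⟩
      exact ⟨⟨Or.inr h1, h2⟩, by omega⟩
  -- generator characterization
  have hgenIff : ∀ i, k ≤ i → i < s → ∀ n, L < n →
      (IsGenerator (nsDel S i \ {L}) n ↔
        ¬ ∃ a b, nsElt S i < a ∧ nsElt S i < b ∧ a ≠ L ∧ b ≠ L ∧ a + b = n) := by
    intro i hik his n hn
    have hiL : nsElt S i < L := hmono his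
    constructor
    · rintro ⟨-, -, hnsum⟩ ⟨a, b, ha, hb, haL, hbL, hab⟩
      exact hnsum ⟨a, ((hT i hik a).mpr ⟨ha, haL⟩).1, b, ((hT i hik b).mpr ⟨hb, hbL⟩).1,
        ((hT i hik a).mpr ⟨ha, haL⟩).2, ((hT i hik b).mpr ⟨hb, hbL⟩).2, hab⟩
    · intro hns
      refine ⟨⟨(hdelmem i hik n).mpr (Or.inr (by omega)), by
        simp only [Set.mem_singleton_iff]; omega⟩, by omega, ?_⟩
      rintro ⟨a, haT, b, hbT, ha0, hb0, hab⟩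
      obtain ⟨ha, haL⟩ := (hT i hik a).mp ⟨haT, ha0⟩
      obtain ⟨hb, hbL⟩ := (hT i hik b).mp ⟨hbT, hb0⟩
      exact hns ⟨a, b, ha, hb, haL, hbL, hab⟩
  -- arithmetic core
  have harith : ∀ i, k ≤ i → i < s → ∀ x, L < x →
      ((¬ ∃ a b, nsElt S i < a ∧ nsElt S i < b ∧ a ≠ L ∧ b ≠ L ∧ a + b = x + nsElt S i) ↔
        ((i + 1 = s ∧ (x = L + 1 ∨ x = L + 2)) ∨ (i + 2 = s ∧ x = L + 1))) := by
    intro i hik his x hx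
    have hli : nsElt S i = c + (i - k) := hlam i hik
    have hiL : nsElt S i + (s - i) = L := by omega
    set t := nsElt S i with ht
    constructor
    · intro hns
      by_contra hcon
      push_neg at hcon
      obtain ⟨hA, hB⟩ := hcon
      apply hns
      by_cases h1 : i + 1 = s
      · obtain ⟨hx1, hx2⟩ := hA h1
        exact ⟨L + 1, x + t - (L + 1), by omega, by omega, by omega, by omega, by omega⟩
      · by_cases h2 : i + 2 = s
        · have hx1 := hB h2
          exact ⟨t + 1, x - 1, by omega, by omega, by omega, by omega, by omega⟩
        · have hd : i + 3 ≤ s := by omega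
          by_cases hx1 : x = L + 1
          · exact ⟨t + 2, x - 2, by omega, by omega, by omega, by omega, by omega⟩
          · exact ⟨t + 1, x - 1, by omega, by omega, by omega, by omega, by omega⟩
    · rintro (⟨h1, hx12⟩ | ⟨h2, hx1⟩) ⟨a, b, ha, hb, haL, hbL, hab⟩ <;> omega
  -- membership characterization of the seed set
  have hmemA : ∀ p : ℕ × ℕ,
      (k ≤ p.1 ∧ p.1 < s ∧ p.2 ∈ S \ {L} ∧ L < p.2 ∧
        IsGenerator (nsDel S p.1 \ {L}) (p.2 + nsElt S p.1)) ↔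
      ((p.1 + 1 = s ∧ (p.2 = L + 1 ∨ p.2 = L + 2)) ∨
        (p.1 + 2 = s ∧ k + 2 ≤ s ∧ p.2 = L + 1)) := by
    rintro ⟨i, x⟩
    constructor
    · rintro ⟨hik, his, hxS, hLx, hgen'⟩
      have hn : L < x + nsElt S i := by omega
      have := (harith i hik his x hLx).mp ((hgenIff i hik his _ hn).mp hgen')
      rcases this with ⟨h1, h2⟩ | ⟨h1, h2⟩
      · exact Or.inl ⟨h1, h2⟩
      · exact Or.inr ⟨h1, by omega, h2⟩
    · intro h
      have hik : k ≤ i := by rcases h with ⟨h1, _⟩ | ⟨h1, h2, _⟩ <;> omega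
      have his : i < s := by rcases h with ⟨h1, _⟩ | ⟨h1, _⟩ <;> omega
      have hxval : x = L + 1 ∨ x = L + 2 := by
        rcases h with ⟨_, h2⟩ | ⟨_, _, h2⟩
        · exact h2
        · exact Or.inl h2
      have hLx : L < x := by omega
      have hxS : x ∈ S \ {L} := by
        refine ⟨hc x (by omega), ?_⟩
        simp only [Set.mem_singleton_iff]
        omega
      refine ⟨hik, his, hxS, hLx, ?_⟩
      refine (hgenIff i hik his _ (by omega)).mpr ?_
      refine (harith i hik his x hLx).mpr ?_
      rcases h with ⟨h1, h2⟩ | ⟨h1, _, h2⟩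
      · exact Or.inl ⟨h1, h2⟩
      · exact Or.inr ⟨h1, h2⟩
  constructor
  · -- s > k + 1 : three seeds
    intro hks
    have hset : {p : ℕ × ℕ | k ≤ p.1 ∧ p.1 < s ∧ p.2 ∈ S \ {L} ∧ L < p.2 ∧
        IsGenerator (nsDel S p.1 \ {L}) (p.2 + nsElt S p.1)} =
        insert (s - 1, L + 1) (insert (s - 1, L + 2) {(s - 2, L + 1)}) := by
      ext ⟨i, x⟩
      rw [Set.mem_setOf_eq, hmemA (i, x)]
      simp only [Set.mem_insert_iff, Set.mem_singleton_iff, Prod.mk.injEq]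
      omega
    rw [hset]
    rw [Set.ncard_insert_of_notMem (by
      simp only [Set.mem_insert_iff, Set.mem_singleton_iff, Prod.mk.injEq]
      omega)]
    rw [Set.ncard_pair (by
      simp only [ne_eq, Prod.mk.injEq]
      omega)]
  · -- s = k + 1 : two seeds
    intro hks
    have hset : {p : ℕ × ℕ | k ≤ p.1 ∧ p.1 < s ∧ p.2 ∈ S \ {L} ∧ L < p.2 ∧
        IsGenerator (nsDel S p.1 \ {L}) (p.2 + nsElt S p.1)} =
        {(k, L + 1), (k, L + 2)} := by
      ext ⟨i, x⟩
      rw [Set.mem_setOf_eq, hmemA (i, x)]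
      simp only [Set.mem_insert_iff, Set.mem_singleton_iff, Prod.mk.injEq]
      omega
    rw [hset]
    exact Set.ncard_pair (by simp only [ne_eq, Prod.mk.injEq]; omega)
end
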